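/- For all integers k ≥ 0 and m ≥ 0, C̄_{3,1}(2^k (6m+5)) ≡ 0 (mod 8). -/

import Mathlib

/-!
Gauss's identity φ(-q) := ∑_{k ∈ ℤ} (-1)^k q^{k²} = (q;q)_∞² / (q²;q²)_∞, together with
(-q;q³)_∞ (-q²;q³)_∞ (-q³;q³)_∞ = (-q;q)_∞ and (-q;q)_∞ (q;q)_∞ = (q²;q²)_∞, turns the generating
function into φ(-q³) / φ(-q). Modulo 8, φ(-q) = 1 + 2S(q) with S(q) = ∑_{k ≥ 1} (-1)^k q^{k²} has
inverse 1 - 2S + 4S², so ∑ C̄₃₁(n) qⁿ ≡ (1 + 2S(q³)) (1 - 2S(q) + 4S(q)²) (mod 8). Since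
4S(q)² ≡ 4 ∑_{k ≥ 1} q^{2k²} (mod 8), the coefficient of q^N vanishes unless N or 2N is of the form
x² + 3y², which never happens for N = 2^k (6m + 5).

Gauss's identity is proved modulo q^{n+1} from its finite form, the case z = -1 of the finite
Jacobi triple product, which in turn is a specialisation of the q-binomial theorem.
-/

open Finset

section GaussianBinomial

variable {R : Type*} [CommRing R]

/-- `qBinom x n k` is the Gaussian binomial coefficient `[n choose k]_x` and `qPoch x n` the
`x`-Pochhammer symbol `(x; x)_n`. -/
def qBinom (x : R) : ℕ → ℕ → R
  | _, 0 => 1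
  | 0, _ + 1 => 0
  | n + 1, k + 1 => qBinom x n k + x ^ (k + 1) * qBinom x n (k + 1)

def qPoch (x : R) (n : ℕ) : R := ∏ j ∈ range n, (1 - x ^ (j + 1))

variable (x : R)

@[simp] lemma qBinom_zero_right (n : ℕ) : qBinom x n 0 = 1 := by cases n <;> rfl

lemma qBinom_succ_succ (n k : ℕ) :
    qBinom x (n + 1) (k + 1) = qBinom x n k + x ^ (k + 1) * qBinom x n (k + 1) := rfl

lemma qBinom_eq_zero_of_lt {n k : ℕ} (h : n < k) : qBinom x n k = 0 := by
  induction n generalizing k with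
  | zero => obtain ⟨k, rfl⟩ := Nat.exists_eq_add_one_of_ne_zero h.ne'; rfl
  | succ n ih =>
    obtain ⟨k, rfl⟩ := Nat.exists_eq_add_one_of_ne_zero (Nat.ne_zero_of_lt h)
    rw [qBinom_succ_succ, ih (by omega), ih (by omega), mul_zero, add_zero]

lemma qPoch_succ (n : ℕ) : qPoch x (n + 1) = qPoch x n * (1 - x ^ (n + 1)) :=
  prod_range_succ _ n

lemma qBinom_mul_qPoch_mul_qPoch {n k : ℕ} (h : k ≤ n) :
    qBinom x n k * qPoch x k * qPoch x (n - k) = qPoch x n := by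
  induction n generalizing k with
  | zero => obtain rfl := Nat.le_zero.1 h; simp [qPoch]
  | succ n ih =>
    cases k with
    | zero => simp [qPoch]
    | succ k =>
      rw [qBinom_succ_succ, qPoch_succ, qPoch_succ, Nat.add_sub_add_right]
      rcases (Nat.lt_or_eq_of_le (Nat.le_of_succ_le_succ h)) with hk | rfl
      · have hsplit : qPoch x (n - k) = qPoch x (n - (k + 1)) * (1 - x ^ (n - k)) := by
          rw [show n - k = n - (k + 1) + 1 by omega, qPoch_succ]
        have hpow : x ^ (k + 1) * x ^ (n - k) = x ^ (n + 1) := by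
          rw [← pow_add]; congr 1; omega
        have ih₁ := ih hk.le
        rw [hsplit] at ih₁
        have ih₂ := ih hk
        rw [qPoch_succ] at ih₂
        rw [hsplit]
        linear_combination (1 - x ^ (k + 1)) * ih₁ +
          x ^ (k + 1) * (1 - x ^ (n - k)) * ih₂ - qPoch x n * hpow
      · have ih₁ := ih le_rfl
        rw [Nat.sub_self] at ih₁
        rw [qBinom_eq_zero_of_lt x (Nat.lt_succ_self k), Nat.sub_self]
        linear_combination (1 - x ^ (k + 1)) * ih₁

end GaussianBinomial

section QBinomialTheorem

variable {R : Type*} [CommRing R]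

/-- The `q`-binomial theorem, in base `q²`. -/
theorem prod_add_mul_pow_eq_sum_qBinom (q y z : R) (N : ℕ) :
    ∏ j ∈ range N, (y + z * q ^ (2 * j + 1)) =
      ∑ k ∈ range (N + 1), qBinom (q ^ 2) N k * q ^ (k ^ 2) * z ^ k * y ^ (N - k) := by
  induction N generalizing z with
  | zero => simp
  | succ N ih =>
    set S := ∑ k ∈ range (N + 1), qBinom (q ^ 2) N k * q ^ (k ^ 2) * (z * q ^ 2) ^ k * y ^ (N - k)
      with hS
    have hprod : ∏ j ∈ range (N + 1), (y + z * q ^ (2 * j + 1)) = S * (y + z * q) := by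
      have hshift : ∏ j ∈ range N, (y + z * q ^ (2 * (j + 1) + 1)) =
          ∏ j ∈ range N, (y + z * q ^ 2 * q ^ (2 * j + 1)) :=
        prod_congr rfl fun j _ => by ring
      rw [prod_range_succ', hshift, ih]
      ring
    have hA : ∑ k ∈ range (N + 1),
        qBinom (q ^ 2) N k * q ^ ((k + 1) ^ 2) * z ^ (k + 1) * y ^ (N + 1 - (k + 1)) =
          z * q * S := by
      rw [mul_sum]
      exact sum_congr rfl fun k _ => by rw [Nat.add_sub_add_right]; ring
    have hB : ∑ k ∈ range (N + 1), (q ^ 2) ^ (k + 1) * qBinom (q ^ 2) N (k + 1) *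
        q ^ ((k + 1) ^ 2) * z ^ (k + 1) * y ^ (N + 1 - (k + 1)) + y ^ (N + 1) = y * S := by
      rw [sum_range_succ, qBinom_eq_zero_of_lt _ (Nat.lt_succ_self N), hS, sum_range_succ',
        mul_add, mul_sum]
      simp only [mul_zero, zero_mul, add_zero, qBinom_zero_right, Nat.sub_zero]
      congr 1
      · refine sum_congr rfl fun k hk => ?_
        rw [show N + 1 - (k + 1) = N - (k + 1) + 1 by have := mem_range.1 hk; omega]
        ring
      · ring
    rw [hprod, sum_range_succ']
    simp only [qBinom_succ_succ, add_mul, sum_add_distrib]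
    rw [hA]
    simp only [qBinom_zero_right, zero_pow two_ne_zero, pow_zero, Nat.sub_zero, one_mul]
    linear_combination -hB

lemma prod_range_neg_pow_odd (q : R) (n : ℕ) :
    ∏ j ∈ range n, (-q ^ (2 * j + 1)) = (-1) ^ n * q ^ (n ^ 2) := by
  induction n with
  | zero => simp
  | succ n ih => rw [prod_range_succ, ih]; ring

lemma prod_range_sub_pow_odd (q : R) (n : ℕ) :
    ∏ j ∈ range (2 * n), (q ^ (2 * n) + -1 * q ^ (2 * j + 1)) =
      (-1) ^ n * q ^ (3 * n ^ 2) * (∏ j ∈ range n, (1 - q ^ (2 * j + 1))) ^ 2 := by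
  have hlow : ∏ j ∈ range n, (q ^ (2 * n) + -1 * q ^ (2 * j + 1)) =
      ∏ j ∈ range n, (-q ^ (2 * j + 1) * (1 - q ^ (2 * (n - 1 - j) + 1))) := by
    refine prod_congr rfl fun j hj => ?_
    obtain ⟨e, rfl⟩ : ∃ e, n = j + 1 + e := ⟨n - (j + 1), by have := mem_range.1 hj; omega⟩
    rw [show j + 1 + e - 1 - j = e by omega]
    ring
  have hhigh : ∏ j ∈ range n, (q ^ (2 * n) + -1 * q ^ (2 * (n + j) + 1)) =
      ∏ j ∈ range n, (q ^ (2 * n) * (1 - q ^ (2 * j + 1))) :=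
    prod_congr rfl fun j _ => by ring
  rw [two_mul n, prod_range_add, ← two_mul, hlow, hhigh, prod_mul_distrib, prod_mul_distrib,
    prod_range_neg_pow_odd, prod_range_reflect (fun j => 1 - q ^ (2 * j + 1)), prod_const,
    card_range]
  ring

/-- The finite Jacobi triple product at `z = -1`. The `q`-binomial theorem at `y = q^(2n)`, `z = -1`
gives it multiplied by `(-1)^n q^(3n²)`. -/
theorem sq_prod_one_sub_pow_odd {q : R} (hq : IsLeftRegular q) (n : ℕ) :
    (∏ j ∈ range n, (1 - q ^ (2 * j + 1))) ^ 2 =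
      ∑ i ∈ range n, (-1) ^ (i + 1) * qBinom (q ^ 2) (2 * n) (n - (i + 1)) * q ^ ((i + 1) ^ 2) +
        ∑ i ∈ range (n + 1), (-1) ^ i * qBinom (q ^ 2) (2 * n) (n + i) * q ^ (i ^ 2) := by
  set T : ℕ → R := fun k =>
    qBinom (q ^ 2) (2 * n) k * q ^ (k ^ 2) * (-1) ^ k * (q ^ (2 * n)) ^ (2 * n - k)
  have key := prod_add_mul_pow_eq_sum_qBinom q (q ^ (2 * n)) (-1) (2 * n)
  rw [prod_range_sub_pow_odd, show 2 * n + 1 = n + (n + 1) by ring, sum_range_add,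
    ← sum_range_reflect] at key
  have hlow : ∀ i ∈ range n, T (n - 1 - i) = (-1) ^ n * q ^ (3 * n ^ 2) *
      ((-1) ^ (i + 1) * qBinom (q ^ 2) (2 * n) (n - (i + 1)) * q ^ ((i + 1) ^ 2)) := by
    intro i hi
    obtain ⟨e, rfl⟩ : ∃ e, n = i + 1 + e := ⟨n - (i + 1), by have := mem_range.1 hi; omega⟩
    have hsign : (-1 : R) ^ (i + 1 + e) * (-1) ^ (i + 1) = (-1) ^ e := by
      rw [← pow_add, show i + 1 + e + (i + 1) = e + 2 * (i + 1) by ring, pow_add, pow_mul]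
      simp
    simp only [T, show i + 1 + e - 1 - i = e by omega, show i + 1 + e - (i + 1) = e by omega,
      show 2 * (i + 1 + e) - e = 2 * (i + 1) + e by omega]
    rw [← hsign]
    ring
  have hhigh : ∀ i ∈ range (n + 1), T (n + i) = (-1) ^ n * q ^ (3 * n ^ 2) *
      ((-1) ^ i * qBinom (q ^ 2) (2 * n) (n + i) * q ^ (i ^ 2)) := by
    intro i hi
    obtain ⟨e, rfl⟩ : ∃ e, n = i + e := ⟨n - i, by have := mem_range.1 hi; omega⟩
    simp only [T, show 2 * (i + e) - (i + e + i) = e by omega]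
    ring
  rw [sum_congr rfl hlow, sum_congr rfl hhigh, ← mul_sum, ← mul_sum, ← mul_add] at key
  exact ((isUnit_neg_one.pow n).isRegular.left.mul (hq.pow _)) key

end QBinomialTheorem

section Truncation

variable {R : Type*} [CommRing R]

lemma pow_smodEq_zero (x : R) {m e : ℕ} (h : m ≤ e) : x ^ e ≡ 0 [SMOD Ideal.span {x ^ m}] :=
  SModEq.zero.2 (Ideal.mem_span_singleton.2 (pow_dvd_pow x h))

lemma one_sub_pow_smodEq_one (x : R) {m e : ℕ} (h : m ≤ e) :
    1 - x ^ e ≡ 1 [SMOD Ideal.span {x ^ m}] := by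
  simpa using (SModEq.refl (1 : R)).sub (pow_smodEq_zero x h)

lemma one_add_pow_smodEq_one (x : R) {m e : ℕ} (h : m ≤ e) :
    1 + x ^ e ≡ 1 [SMOD Ideal.span {x ^ m}] := by
  simpa using (SModEq.refl (1 : R)).add (pow_smodEq_zero x h)

lemma prod_range_smodEq {I : Ideal R} {f : ℕ → R} {M M' : ℕ} (hM : M ≤ M')
    (hf : ∀ j, M ≤ j → f j ≡ 1 [SMOD I]) : ∏ j ∈ range M', f j ≡ ∏ j ∈ range M, f j [SMOD I] := by
  obtain ⟨d, rfl⟩ := Nat.exists_eq_add_of_le hM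
  have htail : ∏ j ∈ range d, f (M + j) ≡ 1 [SMOD I] := by
    simpa using SModEq.prod (s := range d) fun j _ => hf (M + j) (Nat.le_add_right _ _)
  simpa [prod_range_add] using (SModEq.refl (∏ j ∈ range M, f j)).mul htail

lemma qPoch_smodEq (x : R) {a k : ℕ} (h : a ≤ k) :
    qPoch x k ≡ qPoch x a [SMOD Ideal.span {x ^ (a + 1)}] :=
  prod_range_smodEq h fun j hj => one_sub_pow_smodEq_one x (by omega)

lemma isNilpotent_mk_span_pow (x : R) (m : ℕ) :
    IsNilpotent (Ideal.Quotient.mk (Ideal.span {x ^ m}) x) :=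
  ⟨m, by rw [← map_pow, Ideal.Quotient.eq_zero_iff_mem]; exact Ideal.mem_span_singleton_self _⟩

lemma isUnit_qPoch {x : R} (hx : IsNilpotent x) (k : ℕ) : IsUnit (qPoch x k) := by
  simp only [qPoch, IsUnit.prod_iff]
  exact fun j _ => (hx.pow_of_pos j.succ_ne_zero).isUnit_one_sub

lemma map_qPoch {S : Type*} [CommRing S] (f : R →+* S) (x : R) (k : ℕ) :
    f (qPoch x k) = qPoch (f x) k := by
  simp [qPoch]

/-- Modulo `x^(a+1)`, every `(x; x)_b` with `a ≤ b` agrees with the unit `(x; x)_a`, so the product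
formula for `qBinom` reduces to `qBinom x n k * (x; x)_a² = (x; x)_a`. -/
lemma qBinom_mul_qPoch_smodEq (x : R) {n k a c : ℕ} (hak : a ≤ k) (hkn : a + k ≤ n)
    (hac : a ≤ c) : qBinom x n k * qPoch x c ≡ 1 [SMOD Ideal.span {x ^ (a + 1)}] := by
  set π := Ideal.Quotient.mk (Ideal.span {x ^ (a + 1)})
  have hπ : ∀ {b}, a ≤ b → π (qPoch x b) = π (qPoch x a) := fun hb =>
    SModEq.idealQuotientMk.1 (qPoch_smodEq x hb)
  have hprod := congrArg π (qBinom_mul_qPoch_mul_qPoch x (show k ≤ n by omega))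
  rw [map_mul, map_mul, hπ hak, hπ (show a ≤ n - k by omega), hπ (show a ≤ n by omega)] at hprod
  rw [SModEq.idealQuotientMk, map_mul, map_one, hπ hac]
  have hu : IsUnit (π (qPoch x a)) := map_qPoch π x a ▸ isUnit_qPoch (isNilpotent_mk_span_pow x _) a
  exact hu.mul_right_cancel (by rw [hprod, one_mul])

lemma pow_mul_smodEq {q a b : R} {d e n : ℕ} (h : a ≡ b [SMOD Ideal.span {q ^ e}])
    (hn : n ≤ d + e) : q ^ d * a ≡ q ^ d * b [SMOD Ideal.span {q ^ n}] := by
  rw [SModEq.sub_mem, Ideal.mem_span_singleton] at h ⊢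
  rw [← mul_sub]
  exact (pow_dvd_pow q hn).trans (by rw [pow_add]; exact mul_dvd_mul_left _ h)

end Truncation

section GaussIdentity

variable {R : Type*} [CommRing R]

/-- `1 + 2 * thetaSum q n` is the truncation of `φ(-q) = ∑_{k ∈ ℤ} (-1)^k q^(k²)`. -/
def thetaSum (q : R) (n : ℕ) : R := ∑ k ∈ range n, (-1) ^ (k + 1) * q ^ ((k + 1) ^ 2)

lemma qPoch_two_mul (q : R) (n : ℕ) :
    qPoch q (2 * n) = (∏ j ∈ range n, (1 - q ^ (2 * j + 1))) * qPoch (q ^ 2) n := by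
  induction n with
  | zero => simp [qPoch]
  | succ n ih =>
    rw [show 2 * (n + 1) = 2 * n + 1 + 1 by ring, qPoch_succ, qPoch_succ, ih, qPoch_succ,
      prod_range_succ]
    ring

theorem sq_prod_one_sub_pow_odd_mul_qPoch_smodEq {q : R} (hq : IsLeftRegular q) (n : ℕ) :
    (∏ j ∈ range n, (1 - q ^ (2 * j + 1))) ^ 2 * qPoch (q ^ 2) n ≡
      1 + 2 * thetaSum q n [SMOD Ideal.span {q ^ (n + 1)}] := by
  have hterm : ∀ {k a d : ℕ} (s : R), a ≤ k → a + k ≤ 2 * n → a ≤ n → n + 1 ≤ d + 2 * (a + 1) →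
      s * qBinom (q ^ 2) (2 * n) k * q ^ d * qPoch (q ^ 2) n ≡ s * q ^ d
        [SMOD Ideal.span {q ^ (n + 1)}] := by
    intro k a d s hak hkn han hd
    have h := qBinom_mul_qPoch_smodEq (q ^ 2) hak hkn han
    rw [← pow_mul] at h
    have := (SModEq.refl s).mul (pow_mul_smodEq h hd)
    rw [mul_one] at this
    convert this using 1
    ring
  have hlow : ∑ i ∈ range n, (-1) ^ (i + 1) * qBinom (q ^ 2) (2 * n) (n - (i + 1)) *
      q ^ ((i + 1) ^ 2) * qPoch (q ^ 2) n ≡ thetaSum q n [SMOD Ideal.span {q ^ (n + 1)}] :=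
    SModEq.sum fun i hi => by
      have := mem_range.1 hi
      exact hterm _ le_rfl (by omega) (by omega) (by zify [show i + 1 ≤ n by omega]; nlinarith)
  have hhigh : ∑ i ∈ range (n + 1), (-1) ^ i * qBinom (q ^ 2) (2 * n) (n + i) *
      q ^ (i ^ 2) * qPoch (q ^ 2) n ≡ 1 + thetaSum q n [SMOD Ideal.span {q ^ (n + 1)}] := by
    have hsum : ∑ i ∈ range (n + 1), (-1) ^ i * q ^ (i ^ 2) = 1 + thetaSum q n := by
      rw [sum_range_succ', thetaSum]
      simp [add_comm]
    rw [← hsum]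
    refine SModEq.sum fun i hi => ?_
    have := mem_range.1 hi
    exact hterm (a := n - i) _ (by omega) (by omega) (by omega)
      (by zify [show i ≤ n by omega]; nlinarith)
  rw [sq_prod_one_sub_pow_odd hq, add_mul, sum_mul, sum_mul]
  convert hlow.add hhigh using 1
  ring

theorem qPoch_sq_smodEq {q : R} (hq : IsLeftRegular q) {n m : ℕ} (h : n ≤ m) :
    qPoch q m ^ 2 ≡ (1 + 2 * thetaSum q n) * qPoch (q ^ 2) m [SMOD Ideal.span {q ^ (n + 1)}] := by
  set π := Ideal.Quotient.mk (Ideal.span {q ^ (n + 1)})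
  have hle : Ideal.span {(q ^ 2) ^ (n + 1)} ≤ Ideal.span {q ^ (n + 1)} :=
    Ideal.span_singleton_le_span_singleton.2 (pow_dvd_pow_of_dvd (dvd_pow_self q two_ne_zero) _)
  have h₁ : π (qPoch q m) = π (qPoch q n) := qPoch_smodEq q h
  have h₂ : π (qPoch q (2 * n)) = π (qPoch q n) := qPoch_smodEq q (by omega)
  have h₃ : π (qPoch (q ^ 2) m) = π (qPoch (q ^ 2) n) := (qPoch_smodEq (q ^ 2) h).mono hle
  have h₄ := SModEq.idealQuotientMk.1 (sq_prod_one_sub_pow_odd_mul_qPoch_smodEq hq n)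
  rw [SModEq.idealQuotientMk, map_pow, map_mul, h₁, ← h₂, h₃, qPoch_two_mul]
  simp only [map_mul, map_pow] at h₄ ⊢
  linear_combination π (qPoch (q ^ 2) n) * h₄

end GaussIdentity

section TruncatedPowerSeries

open PowerSeries

variable {R : Type*} [CommRing R]

lemma smodEq_X_pow_iff {f g : R⟦X⟧} {n : ℕ} :
    f ≡ g [SMOD Ideal.span {X ^ n}] ↔ ∀ i < n, coeff i f = coeff i g := by
  simp [SModEq.sub_mem, Ideal.mem_span_singleton, X_pow_dvd_iff, sub_eq_zero]

lemma qPoch_X_pow_sq_smodEq {t : ℕ} (ht : 1 ≤ t) (N : ℕ) :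
    qPoch (X ^ t : R⟦X⟧) (N + 1) ^ 2 ≡
      (1 + 2 * thetaSum (X ^ t) N) * qPoch (X ^ (2 * t)) (N + 1)
        [SMOD Ideal.span {X ^ (N + 1)}] := by
  have h := qPoch_sq_smodEq (q := (X ^ t : R⟦X⟧)) X_pow_mul_injective (Nat.le_succ N)
  rw [← pow_mul X t 2, mul_comm t 2] at h
  refine h.mono (Ideal.span_singleton_le_span_singleton.2 ?_)
  rw [← pow_mul]
  exact pow_dvd_pow X (by nlinarith)

lemma smodEq_of_coeff_mul_prod {F : R⟦X⟧} {f g : ℕ → R⟦X⟧}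
    (hf : ∀ j, f j ≡ 1 [SMOD Ideal.span {X ^ (j + 1)}])
    (hg : ∀ j, g j ≡ 1 [SMOD Ideal.span {X ^ (j + 1)}])
    (h : ∀ N, coeff N (F * ∏ n ∈ range (N + 1), f n) = coeff N (∏ n ∈ range (N + 1), g n))
    (N : ℕ) : F * ∏ n ∈ range (N + 1), f n ≡ ∏ n ∈ range (N + 1), g n
      [SMOD Ideal.span {X ^ (N + 1)}] := by
  rw [smodEq_X_pow_iff]
  intro i hi
  have hmono : ∀ {j}, i ≤ j → Ideal.span {(X : R⟦X⟧) ^ (j + 1)} ≤ Ideal.span {X ^ (i + 1)} :=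
    fun hj => Ideal.span_singleton_le_span_singleton.2 (pow_dvd_pow X (by omega))
  have hf' := prod_range_smodEq (M := i + 1) (M' := N + 1) (by omega)
    fun j hj => (hf j).mono (hmono (by omega))
  have hg' := prod_range_smodEq (M := i + 1) (M' := N + 1) (by omega)
    fun j hj => (hg j).mono (hmono (by omega))
  rw [smodEq_X_pow_iff.1 ((SModEq.refl F).mul hf') i (by omega), h i,
    smodEq_X_pow_iff.1 hg' i (by omega)]

end TruncatedPowerSeries

section GeneratingFunction

open PowerSeries

variable {R : Type*} [CommRing R]

lemma prod_one_add_pow_mul_qPoch (x : R) (m : ℕ) :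
    (∏ j ∈ range m, (1 + x ^ (j + 1))) * qPoch x m = qPoch (x ^ 2) m := by
  rw [qPoch, qPoch, ← prod_mul_distrib]
  exact prod_congr rfl fun j _ => by ring

lemma prod_range_three_mul {M : Type*} [CommMonoid M] (f : ℕ → M) (n : ℕ) :
    ∏ j ∈ range (3 * n), f j = ∏ j ∈ range n, f (3 * j) * f (3 * j + 1) * f (3 * j + 2) := by
  induction n with
  | zero => simp
  | succ n ih =>
    rw [show 3 * (n + 1) = 3 * n + 1 + 1 + 1 by ring, prod_range_succ, prod_range_succ,
      prod_range_succ, ih, prod_range_succ]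
    simp only [mul_assoc]

theorem mul_one_add_two_thetaSum_smodEq {F : R⟦X⟧} {N : ℕ}
    (hF : F * qPoch X (N + 1) ≡ ∏ n ∈ range (N + 1),
      (1 - X ^ (3 * (n + 1))) * (1 + X ^ (3 * n + 1)) * (1 + X ^ (3 * n + 2))
        [SMOD Ideal.span {X ^ (N + 1)}]) :
    F * (1 + 2 * thetaSum X N) ≡ 1 + 2 * thetaSum (X ^ 3) N [SMOD Ideal.span {X ^ (N + 1)}] := by
  set π := Ideal.Quotient.mk (Ideal.span {(X : R⟦X⟧) ^ (N + 1)})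
  set B := ∏ j ∈ range (N + 1), (1 + (X : R⟦X⟧) ^ (j + 1))
  set B₃ := ∏ j ∈ range (N + 1), (1 + (X ^ 3 : R⟦X⟧) ^ (j + 1))
  set B₁₂ := ∏ j ∈ range (N + 1), (1 + (X : R⟦X⟧) ^ (3 * j + 1)) * (1 + X ^ (3 * j + 2))
  have h₁ : π F * π (qPoch X (N + 1)) = π (qPoch (X ^ 3) (N + 1)) * π B₁₂ := by
    have hsplit : ∏ n ∈ range (N + 1),
        (1 - (X : R⟦X⟧) ^ (3 * (n + 1))) * (1 + X ^ (3 * n + 1)) * (1 + X ^ (3 * n + 2)) =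
          qPoch (X ^ 3) (N + 1) * B₁₂ := by
      rw [qPoch, ← prod_mul_distrib]
      exact prod_congr rfl fun n _ => by ring
    rw [← map_mul, ← map_mul, ← hsplit]
    exact hF
  have h₂ : π B₁₂ * π B₃ = π B := by
    have hmerge : B₁₂ * B₃ = ∏ j ∈ range (3 * (N + 1)), (1 + (X : R⟦X⟧) ^ (j + 1)) := by
      rw [prod_range_three_mul, ← prod_mul_distrib]
      exact prod_congr rfl fun j _ => by ring
    rw [← map_mul, hmerge]
    exact prod_range_smodEq (by omega) fun j hj => one_add_pow_smodEq_one X (by omega)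
  have h₃ : π B * π (qPoch X (N + 1)) = π (qPoch (X ^ 2) (N + 1)) := by
    rw [← map_mul, prod_one_add_pow_mul_qPoch]
  have h₄ : π B₃ * π (qPoch (X ^ 3) (N + 1)) = π (qPoch (X ^ 6) (N + 1)) := by
    rw [← map_mul, prod_one_add_pow_mul_qPoch, ← pow_mul]
  have g₁ := qPoch_X_pow_sq_smodEq (R := R) le_rfl N
  have g₃ := qPoch_X_pow_sq_smodEq (R := R) (t := 3) (by norm_num) N
  simp only [pow_one, mul_one] at g₁
  rw [SModEq.idealQuotientMk, map_pow, map_mul] at g₁ g₃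
  have hnil : ∀ {t}, t ≠ 0 → IsNilpotent (π (X ^ t)) := fun ht => by
    rw [map_pow]; exact (isNilpotent_mk_span_pow X (N + 1)).pow_of_pos ht
  have hu : IsUnit (π (qPoch (X ^ 2) (N + 1)) * π (qPoch (X ^ 6) (N + 1))) := by
    simp only [map_qPoch]
    exact (isUnit_qPoch (hnil two_ne_zero) _).mul (isUnit_qPoch (hnil (by norm_num)) _)
  rw [SModEq.idealQuotientMk]
  refine hu.mul_right_cancel ?_
  simp only [map_mul] at g₁ g₃ ⊢
  linear_combination (-π F * π (qPoch (X ^ 6) (N + 1))) * g₁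
    - π F * π (qPoch X (N + 1)) ^ 2 * h₄
    + π (qPoch X (N + 1)) * π B₃ * π (qPoch (X ^ 3) (N + 1)) * h₁
    + π (qPoch X (N + 1)) * π (qPoch (X ^ 3) (N + 1)) ^ 2 * h₂
    + π (qPoch (X ^ 3) (N + 1)) ^ 2 * h₃ + π (qPoch (X ^ 2) (N + 1)) * g₃

end GeneratingFunction

lemma sq_mod_three (x : ℕ) : x ^ 2 % 3 = 0 ∨ x ^ 2 % 3 = 1 := by
  have := Nat.mod_lt x (show 3 > 0 by norm_num)
  interval_cases hx : x % 3 <;> simp [Nat.pow_mod, hx]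

lemma sq_mod_eight_of_odd {x : ℕ} (hx : x % 2 = 1) : x ^ 2 % 8 = 1 := by
  have := Nat.mod_lt x (show 8 > 0 by norm_num)
  have h2 : x % 8 % 2 = 1 := by omega
  interval_cases hx8 : x % 8 <;> simp_all [Nat.pow_mod]

lemma sq_mod_two (x : ℕ) : x ^ 2 % 2 = x % 2 := by
  have := Nat.mod_lt x (show 2 > 0 by norm_num)
  interval_cases hx : x % 2 <;> simp [Nat.pow_mod, hx]

/-- By descent on `k`: if `x` and `y` are even, halve them; if both are odd,
`x² + 3y² ≡ 4 (mod 8)`, leaving only `k = 2`, which fails modulo 3 like `k = 0`. -/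
theorem sq_add_three_mul_sq_ne (k m x y : ℕ) : x ^ 2 + 3 * y ^ 2 ≠ 2 ^ k * (6 * m + 5) := by
  induction k using Nat.strong_induction_on generalizing x y with
  | _ k ih =>
    intro h
    rcases k with _ | k
    · rcases sq_mod_three x with h3 | h3 <;> omega
    have hx2 := sq_mod_two x
    have hy2 := sq_mod_two y
    have heven : 2 ^ (k + 1) * (6 * m + 5) = 2 * (2 ^ k * (6 * m + 5)) := by ring
    rcases Nat.mod_two_eq_zero_or_one x with hx | hx
    · obtain ⟨a, rfl⟩ : 2 ∣ x := Nat.dvd_of_mod_eq_zero hx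
      obtain ⟨b, rfl⟩ : 2 ∣ y := Nat.dvd_of_mod_eq_zero (by omega)
      have hsq : (2 * a) ^ 2 + 3 * (2 * b) ^ 2 = 4 * (a ^ 2 + 3 * b ^ 2) := by ring
      rcases k with _ | k
      · omega
      · refine ih k (by omega) a b ?_
        have : 2 ^ (k + 1 + 1) * (6 * m + 5) = 4 * (2 ^ k * (6 * m + 5)) := by ring
        nlinarith
    · have hx8 := sq_mod_eight_of_odd hx
      have hy8 := sq_mod_eight_of_odd (show y % 2 = 1 by omega)
      rcases k with _ | _ | k
      · omega
      · rcases sq_mod_three x with h3 | h3 <;> omega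
      · have : 2 ^ (k + 1 + 1 + 1) * (6 * m + 5) = 8 * (2 ^ k * (6 * m + 5)) := by ring
        omega

section Coefficients

open PowerSeries

variable {R : Type*} [CommRing R]

lemma coeff_ofNat_mul (c n : ℕ) [c.AtLeastTwo] (f : R⟦X⟧) :
    coeff n ((OfNat.ofNat c : R⟦X⟧) * f) = OfNat.ofNat c * coeff n f := by
  rw [← map_ofNat C, coeff_C_mul]

lemma powerSeries_eight_eq_zero (h8 : (8 : R) = 0) : (8 : R⟦X⟧) = 0 := by
  rw [← map_ofNat C, h8, map_zero]

lemma coeff_neg_one_pow_mul_X_pow (j e n : ℕ) :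
    coeff n ((-1 : R⟦X⟧) ^ j * X ^ e) = if n = e then (-1) ^ j else 0 := by
  rw [show ((-1 : R⟦X⟧) ^ j) = C ((-1) ^ j) by simp, coeff_C_mul_X_pow]

lemma coeff_thetaSum_X_pow_eq_zero {t n M : ℕ} (h : ∀ k, n ≠ t * (k + 1) ^ 2) :
    coeff n (thetaSum (X ^ t : R⟦X⟧) M) = 0 := by
  simp [thetaSum, ← pow_mul, coeff_neg_one_pow_mul_X_pow, h]

lemma coeff_thetaSum_mul_thetaSum_eq_zero {s t n M : ℕ}
    (h : ∀ a b, n ≠ s * (a + 1) ^ 2 + t * (b + 1) ^ 2) :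
    coeff n (thetaSum (X ^ s : R⟦X⟧) M * thetaSum (X ^ t) M) = 0 := by
  simp only [thetaSum, sum_mul_sum, map_sum]
  refine sum_eq_zero fun a _ => sum_eq_zero fun b _ => ?_
  rw [show (-1 : R⟦X⟧) ^ (a + 1) * (X ^ s) ^ ((a + 1) ^ 2) *
      ((-1) ^ (b + 1) * (X ^ t) ^ ((b + 1) ^ 2)) =
        (-1) ^ (a + 1 + (b + 1)) * X ^ (s * (a + 1) ^ 2 + t * (b + 1) ^ 2) by ring,
    coeff_neg_one_pow_mul_X_pow, if_neg (h a b)]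

lemma four_mul_sum_sq {ι : Type*} (h8 : (8 : R) = 0) (s : Finset ι) (f : ι → R) :
    4 * (∑ i ∈ s, f i) ^ 2 = 4 * ∑ i ∈ s, f i ^ 2 := by
  classical
  induction s using Finset.induction_on with
  | empty => simp
  | insert a s ha ih =>
    rw [sum_insert ha, sum_insert ha]
    linear_combination ih + f a * (∑ i ∈ s, f i) * h8

lemma coeff_four_mul_thetaSum_sq_eq_zero (h8 : (8 : R) = 0) {n M : ℕ}
    (h : ∀ k, n ≠ 2 * (k + 1) ^ 2) : coeff n (4 * thetaSum (X : R⟦X⟧) M ^ 2) = 0 := by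
  rw [thetaSum, four_mul_sum_sq (powerSeries_eight_eq_zero h8), coeff_ofNat_mul, map_sum,
    sum_eq_zero, mul_zero]
  intro k _
  rw [mul_pow, ← pow_mul, ← pow_mul, Even.neg_one_pow ⟨k + 1, by ring⟩, one_mul, mul_comm,
    coeff_X_pow, if_neg (h k)]

theorem coeff_two_pow_mul_six_mul_add_five_eq_zero (h8 : (8 : R) = 0) (k m M : ℕ) :
    coeff (2 ^ k * (6 * m + 5)) ((1 + 2 * thetaSum (X ^ 3 : R⟦X⟧) M) *
      (1 - 2 * thetaSum X M + 4 * thetaSum X M ^ 2)) = 0 := by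
  set θ₁ := thetaSum (X : R⟦X⟧) M
  set θ₃ := thetaSum (X ^ 3 : R⟦X⟧) M
  have hform : ∀ x y, 2 ^ k * (6 * m + 5) ≠ x ^ 2 + 3 * y ^ 2 :=
    fun x y h => sq_add_three_mul_sq_ne k m x y h.symm
  have h₁ : coeff (2 ^ k * (6 * m + 5)) θ₁ = 0 := by
    simpa using coeff_thetaSum_X_pow_eq_zero (R := R) (t := 1) (M := M)
      fun j h => hform (j + 1) 0 (by simpa using h)
  have h₃ : coeff (2 ^ k * (6 * m + 5)) θ₃ = 0 :=
    coeff_thetaSum_X_pow_eq_zero fun j h => hform 0 (j + 1) (by simpa using h)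
  have h₃₁ : coeff (2 ^ k * (6 * m + 5)) (θ₃ * θ₁) = 0 := by
    simpa using coeff_thetaSum_mul_thetaSum_eq_zero (R := R) (s := 3) (t := 1) (M := M)
      fun a b h => hform (b + 1) (a + 1) (by rw [h]; ring)
  have h₁₁ : coeff (2 ^ k * (6 * m + 5)) (4 * θ₁ ^ 2) = 0 :=
    coeff_four_mul_thetaSum_sq_eq_zero h8 fun j h =>
      sq_add_three_mul_sq_ne (k + 1) m (2 * (j + 1)) 0 (by
        rw [show 2 ^ (k + 1) * (6 * m + 5) = 2 * (2 ^ k * (6 * m + 5)) by ring, h]; ring)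
  have h8' := powerSeries_eight_eq_zero h8
  have hexp : (1 + 2 * θ₃) * (1 - 2 * θ₁ + 4 * θ₁ ^ 2) =
      1 - 2 * θ₁ + 2 * θ₃ - 4 * (θ₃ * θ₁) + 4 * θ₁ ^ 2 := by
    linear_combination θ₃ * θ₁ ^ 2 * h8'
  rw [hexp]
  simp only [map_add, map_sub]
  rw [h₁₁, coeff_ofNat_mul, coeff_ofNat_mul, coeff_ofNat_mul, h₁, h₃, h₃₁, coeff_one,
    if_neg (by positivity)]
  simp

end Coefficients

lemma smodEq_of_mul_one_add_two_mul {A : Type*} [CommRing A] (h8 : (8 : A) = 0) {I : Ideal A}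
    {f s t : A} (h : f * (1 + 2 * s) ≡ 1 + 2 * t [SMOD I]) :
    f ≡ (1 + 2 * t) * (1 - 2 * s + 4 * s ^ 2) [SMOD I] := by
  rw [SModEq.sub_mem] at h ⊢
  convert I.mul_mem_left (1 - 2 * s + 4 * s ^ 2) h using 1
  linear_combination -(f * s ^ 3) * h8

open PowerSeries in
/-- For all `k, m ≥ 0`, `C̄₃₁(2^k (6m + 5)) ≡ 0 (mod 8)`. -/
theorem C31_two_pow_mod_eight (C : ℕ → ℤ)
    (hC : ∀ N : ℕ, PowerSeries.coeff N
      ((PowerSeries.mk fun n => C n) *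
        ∏ n ∈ Finset.range (N + 1), (1 - (PowerSeries.X : PowerSeries ℤ) ^ (n + 1))) =
      PowerSeries.coeff N
      (∏ n ∈ Finset.range (N + 1),
        ((1 - (PowerSeries.X : PowerSeries ℤ) ^ (3 * (n + 1))) *
          (1 + PowerSeries.X ^ (3 * n + 1)) * (1 + PowerSeries.X ^ (3 * n + 2)))))
    (k m : ℕ) :
    C (2 ^ k * (6 * m + 5)) ≡ 0 [ZMOD 8] := by
  set N := 2 ^ k * (6 * m + 5)
  set F : (ZMod 8)⟦X⟧ := PowerSeries.mk fun n => (C n : ZMod 8)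
  have hF : ∀ M, coeff M (F * ∏ n ∈ range (M + 1), (1 - X ^ (n + 1))) =
      coeff M (∏ n ∈ range (M + 1),
        (1 - X ^ (3 * (n + 1))) * (1 + X ^ (3 * n + 1)) * (1 + X ^ (3 * n + 2))) := fun M => by
    have := congrArg (Int.castRingHom (ZMod 8)) (hC M)
    rw [← coeff_map, ← coeff_map] at this
    have hmap : PowerSeries.map (Int.castRingHom (ZMod 8)) (PowerSeries.mk fun n => C n) = F := by
      ext n; simp [F]
    simpa [hmap, map_prod] using this
  have hf : ∀ j, (1 - X ^ (j + 1) : (ZMod 8)⟦X⟧) ≡ 1 [SMOD Ideal.span {X ^ (j + 1)}] :=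
    fun j => one_sub_pow_smodEq_one X le_rfl
  have hg : ∀ j, ((1 - X ^ (3 * (j + 1))) * (1 + X ^ (3 * j + 1)) * (1 + X ^ (3 * j + 2)) :
      (ZMod 8)⟦X⟧) ≡ 1 [SMOD Ideal.span {X ^ (j + 1)}] := fun j => by
    simpa using
      ((one_sub_pow_smodEq_one (X : (ZMod 8)⟦X⟧) (show j + 1 ≤ 3 * (j + 1) by omega)).mul
        (one_add_pow_smodEq_one X (show j + 1 ≤ 3 * j + 1 by omega))).mul
          (one_add_pow_smodEq_one X (show j + 1 ≤ 3 * j + 2 by omega))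
  have hθ := mul_one_add_two_thetaSum_smodEq (smodEq_of_coeff_mul_prod hf hg hF N)
  have h8 : (8 : ZMod 8) = 0 := rfl
  have hcoeff := smodEq_X_pow_iff.1
    (smodEq_of_mul_one_add_two_mul (powerSeries_eight_eq_zero h8) hθ) N N.lt_succ_self
  rw [coeff_two_pow_mul_six_mul_add_five_eq_zero h8, coeff_mk] at hcoeff
  exact (ZMod.intCast_eq_intCast_iff _ _ 8).1 (by simpa using hcoeff)
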